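/- arXiv:1905.09516 — 2 statements merged into one kernel-verified Lean document; each statement's English description precedes it below -/
import Mathlib

section
/- Let p be a prime, let n₁, n₂, n₃ be natural numbers, and let F be a finite abelian p-group, and let G = ℤ_p^{n₁} × ℚ_p^{n₂} × (ℚ_p/ℤ_p)^{n₃} × F (with the product topology, where the Prüfer group ℚ_p/ℤ_p carries the quotient topology, which is discrete, and F is discrete). Then every continuous endomorphism of G has zero topological entropy if and only if n₂ = 0. -/
open MeasureTheory Filter Topology Pointwise
open scoped ENNReal NNReal Classical

/-- The `n`-th `φ`-cotrajectory of `U`: `U ∩ φ⁻¹(U) ∩ … ∩ φ⁻⁽ⁿ⁻¹⁾(U)`. -/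
def cotraj {G : Type*} (φ : G → G) (U : Set G) (n : ℕ) : Set G :=
  ⋂ k ∈ Finset.range n, (φ^[k]) ⁻¹' U

/-- Topological entropy of a (continuous) endomorphism of a locally compact Hausdorff
additive topological group, computed with respect to Haar measure:
`h_top(φ) = sup_U limsup_n (−log μ(C_n(φ,U)))/n`, the supremum over all compact
neighborhoods `U` of `0`. -/
noncomputable def addHtop {G : Type*} [AddGroup G] [TopologicalSpace G] (φ : G → G) : ℝ≥0∞ :=
  letI : MeasurableSpace G := borel G
  haveI : BorelSpace G := ⟨rfl⟩
  if h : IsTopologicalAddGroup G ∧ T2Space G ∧ LocallyCompactSpace G then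
    haveI := h.1
    haveI := h.2.1
    haveI := h.2.2
    ⨆ U ∈ {U : Set G | IsCompact U ∧ U ∈ 𝓝 (0 : G)},
      Filter.atTop.limsup fun n : ℕ =>
        ENNReal.ofReal
          ((-Real.log ((MeasureTheory.Measure.addHaar (cotraj φ U n)).toReal)) / n)
  else 0

/-- The Prüfer group `ℚ_p/ℤ_p`, with the quotient topology. -/
abbrev PadicPrufer (p : ℕ) [Fact p.Prime] :=
  ℚ_[p] ⧸ (PadicInt.subring p).toAddSubgroup

/-- The locally compact abelian `p`-group `ℤ_p^{n₁} × ℚ_p^{n₂} × (ℚ_p/ℤ_p)^{n₃} × F`,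
with the product topology. -/
abbrev PadicLCA (p : ℕ) [Fact p.Prime] (n₁ n₂ n₃ : ℕ) (F : Type*) :=
  (Fin n₁ → ℤ_[p]) × (Fin n₂ → ℚ_[p]) × (Fin n₃ → PadicPrufer p) × F

/-!
If `n₂ = 0`, the group is `ℤ_p^{n₁} × D` with `D` discrete, and every neighbourhood of `0`
contains a neighbourhood `p^m ℤ_p^{n₁} × {0}` invariant under a given continuous endomorphism `φ`.
All cotrajectories of `φ` then contain that neighbourhood, so their Haar measures are bounded
below and the entropy vanishes.

If `n₂ > 0`, multiplication `σ` by `p⁻¹` on the `ℚ_p^{n₂}` factor is an automorphism expanding the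
compact open set `U = ℤ_p^{n₁} × ℤ_p^{n₂} × {0}`, i.e. `σ⁻¹ U ⊊ U`. The cotrajectories of `U` are
then the sets `σ⁻ⁿ U`, of Haar measure `Δ(σ)⁻ⁿ μ(U)` where `Δ(σ) > 1` is the modulus of `σ`, so
`h_top(σ) ≥ log Δ(σ) > 0`.
-/

open Set Metric

section Cotraj

variable {G : Type*}

lemma cotraj_subset {φ : G → G} {U : Set G} {n : ℕ} (hn : n ≠ 0) : cotraj φ U n ⊆ U :=
  biInter_subset_of_mem (t := fun k => (φ^[k]) ⁻¹' U) (Finset.mem_range.2 (Nat.pos_of_ne_zero hn))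

lemma subset_cotraj_of_mapsTo {φ : G → G} {U V : Set G} (hVU : V ⊆ U) (hV : MapsTo φ V V)
    (n : ℕ) : V ⊆ cotraj φ U n :=
  subset_iInter₂ fun k _ => (hV.iterate k).subset_preimage.trans (preimage_mono hVU)

lemma cotraj_succ_of_preimage_subset {φ : G → G} {U : Set G} (h : φ ⁻¹' U ⊆ U) (n : ℕ) :
    cotraj φ U (n + 1) = (φ^[n]) ⁻¹' U := by
  have anti : Antitone fun k => (φ^[k]) ⁻¹' U := antitone_nat_of_succ_le fun k => by
    rw [Function.iterate_succ', preimage_comp]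
    exact preimage_mono h
  refine (biInter_subset_of_mem (Finset.mem_range.2 n.lt_succ_self)).antisymm ?_
  exact subset_iInter₂ fun k hk => anti (Nat.lt_succ_iff.1 (Finset.mem_range.1 hk))

end Cotraj

lemma tendsto_mul_add_div_succ (b d : ℝ) :
    Tendsto (fun n : ℕ => (n * b + d) / (n + 1 : ℕ)) atTop (𝓝 b) := by
  have h₁ := (tendsto_natCast_div_add_atTop (1 : ℝ)).mul_const b
  have h₂ := (tendsto_const_div_atTop_nhds_zero_nat d).comp (tendsto_add_atTop_nat 1)
  simpa [add_div, mul_div_assoc, mul_comm] using h₁.add h₂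

section Entropy

variable {G : Type*} [AddGroup G] [TopologicalSpace G] [IsTopologicalAddGroup G]
  [LocallyCompactSpace G]

section Measure

variable [MeasurableSpace G] [BorelSpace G]

noncomputable def addHtopAt (φ : G → G) (U : Set G) : ℝ≥0∞ :=
  atTop.limsup fun n : ℕ =>
    ENNReal.ofReal (-Real.log (Measure.addHaar (cotraj φ U n)).toReal / n)

lemma addHtop_eq_iSup [T2Space G] (φ : G → G) :
    addHtop φ = ⨆ U ∈ {U : Set G | IsCompact U ∧ U ∈ 𝓝 0}, addHtopAt φ U := by
  obtain rfl := ‹BorelSpace G›.measurable_eq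
  rw [addHtop, dif_pos ⟨‹_›, ‹_›, ‹_›⟩]
  rfl

lemma addHtopAt_eq_zero_of_subset_cotraj {φ : G → G} {U V : Set G} (hU : IsCompact U)
    (hV : V ∈ 𝓝 0) (hVU : ∀ n, V ⊆ cotraj φ U n) : addHtopAt φ U = 0 := by
  set μ : Measure G := Measure.addHaar
  have hμV : 0 < (μ V).toReal := ENNReal.toReal_pos (μ.measure_pos_of_mem_nhds hV).ne'
    (measure_ne_top_of_subset ((hVU 1).trans (cotraj_subset one_ne_zero)) hU.measure_ne_top)
  set L := -Real.log (μ V).toReal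
  have hbound : ∀ n ≠ 0, -Real.log (μ (cotraj φ U n)).toReal / n ≤ L / n := fun n hn => by
    gcongr
    exact neg_le_neg <| Real.log_le_log hμV (ENNReal.toReal_mono
      (measure_ne_top_of_subset (cotraj_subset hn) hU.measure_ne_top) (measure_mono (hVU n)))
  have hL : Tendsto (fun n : ℕ => ENNReal.ofReal (L / n)) atTop (𝓝 0) := by
    simpa using ENNReal.tendsto_ofReal (tendsto_const_div_atTop_nhds_zero_nat L)
  refine le_antisymm ?_ bot_le
  calc addHtopAt φ U ≤ atTop.limsup fun n : ℕ => ENNReal.ofReal (L / n) :=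
        limsup_le_limsup <| (eventually_ne_atTop 0).mono fun n hn =>
          ENNReal.ofReal_le_ofReal (hbound n hn)
    _ = 0 := hL.limsup_eq

lemma addHaar_preimage_addEquiv (σ : G ≃ₜ+ G) (X : Set G) :
    Measure.addHaar (σ ⁻¹' X) = (addEquivAddHaarChar σ : ℝ≥0∞)⁻¹ * Measure.addHaar X := by
  have hc : (addEquivAddHaarChar σ : ℝ≥0∞) ≠ 0 := by simpa using (addEquivAddHaarChar_pos σ).ne'
  conv_rhs => rw [← addEquivAddHaarChar_smul_preimage Measure.addHaar σ, ENNReal.smul_def,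
    smul_eq_mul, ENNReal.inv_mul_cancel_left hc ENNReal.coe_ne_top]

lemma addHaar_preimage_iterate_addEquiv (σ : G ≃ₜ+ G) (X : Set G) (n : ℕ) :
    Measure.addHaar ((σ^[n]) ⁻¹' X) = (addEquivAddHaarChar σ : ℝ≥0∞)⁻¹ ^ n * Measure.addHaar X := by
  induction n with
  | zero => simp
  | succ n ih => rw [Function.iterate_succ, preimage_comp, addHaar_preimage_addEquiv, ih, pow_succ',
      mul_assoc]

lemma addHtopAt_addEquiv_of_preimage_subset (σ : G ≃ₜ+ G) {U : Set G} (hU : IsCompact U)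
    (hU0 : U ∈ 𝓝 0) (hσU : σ ⁻¹' U ⊆ U) :
    addHtopAt σ U = ENNReal.ofReal (Real.log (addEquivAddHaarChar σ)) := by
  set c : ℝ := (addEquivAddHaarChar σ : ℝ)
  set a : ℝ := (Measure.addHaar U).toReal
  have hc : 0 < c := addEquivAddHaarChar_pos σ
  have ha : 0 < a := ENNReal.toReal_pos (Measure.addHaar.measure_pos_of_mem_nhds hU0).ne'
    hU.measure_ne_top
  have hlog : ∀ n : ℕ, -Real.log (Measure.addHaar (cotraj σ U (n + 1))).toReal =
      n * Real.log c + -Real.log a := fun n => by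
    rw [cotraj_succ_of_preimage_subset hσU, addHaar_preimage_iterate_addEquiv, ENNReal.toReal_mul,
      ENNReal.toReal_pow, ENNReal.toReal_inv, ENNReal.coe_toReal,
      Real.log_mul (by positivity) ha.ne', Real.log_pow, Real.log_inv]
    ring
  refine Tendsto.limsup_eq <| ENNReal.tendsto_ofReal <| (tendsto_add_atTop_iff_nat 1).1 ?_
  simpa only [hlog] using tendsto_mul_add_div_succ (Real.log c) (-Real.log a)

lemma one_lt_addEquivAddHaarChar [T2Space G] (σ : G ≃ₜ+ G) {U : Set G} (hU : IsCompact U)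
    (hUo : IsOpen U) (hσU : σ ⁻¹' U ⊂ U) : 1 < addEquivAddHaarChar σ := by
  set μ : Measure G := Measure.addHaar
  have hμU : μ U ≠ ∞ := hU.measure_ne_top
  have hpos : 0 < μ (U \ σ ⁻¹' U) :=
    (hUo.sdiff (hU.isClosed.preimage σ.continuous)).measure_pos μ (sdiff_nonempty.2 hσU.2)
  have hlt : μ (σ ⁻¹' U) < μ U := by
    rwa [measure_sdiff hσU.1 (hU.isClosed.preimage σ.continuous).nullMeasurableSet
      (measure_ne_top_of_subset hσU.1 hμU), tsub_pos_iff_lt] at hpos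
  rw [addHaar_preimage_addEquiv] at hlt
  have hU0 : μ U ≠ 0 := (hpos.trans_le (measure_mono sdiff_subset)).ne'
  rw [← ENNReal.one_lt_coe_iff, ← ENNReal.inv_lt_one]
  exact (ENNReal.mul_lt_mul_iff_left hU0 hμU).1 (by rwa [one_mul])

end Measure

theorem addHtop_addEquiv_pos [T2Space G] (σ : G ≃ₜ+ G) {U : Set G} (hU : IsCompact U)
    (hUo : IsOpen U) (hU0 : (0 : G) ∈ U) (hσU : σ ⁻¹' U ⊂ U) : 0 < addHtop σ := by
  borelize G
  rw [addHtop_eq_iSup]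
  refine lt_of_lt_of_le ?_ (le_iSup₂ (f := fun U (_ : U ∈ {U : Set G | IsCompact U ∧ U ∈ 𝓝 0}) =>
    addHtopAt σ U) U ⟨hU, hUo.mem_nhds hU0⟩)
  rw [addHtopAt_addEquiv_of_preimage_subset σ hU (hUo.mem_nhds hU0) hσU.1, ENNReal.ofReal_pos]
  exact Real.log_pos (one_lt_addEquivAddHaarChar σ hU hUo hσU)

theorem addHtop_eq_zero_of_forall_exists_mapsTo [T2Space G] (φ : G → G)
    (h : ∀ U ∈ 𝓝 (0 : G), ∃ V ∈ 𝓝 (0 : G), V ⊆ U ∧ MapsTo φ V V) : addHtop φ = 0 := by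
  borelize G
  simp only [addHtop_eq_iSup, ENNReal.iSup_eq_zero]
  rintro U ⟨hU, hU0⟩
  obtain ⟨V, hV, hVU, hφV⟩ := h U hU0
  exact addHtopAt_eq_zero_of_subset_cotraj hU hV (subset_cotraj_of_mapsTo hVU hφV)

end Entropy

section Padic

variable {p : ℕ} [Fact p.Prime]

instance : DiscreteTopology (PadicPrufer p) := by
  refine QuotientAddGroup.discreteTopology ?_
  convert IsUltrametricDist.isOpen_closedBall (0 : ℚ_[p]) one_ne_zero
  ext x
  simp [PadicInt.mem_subring_iff]

lemma PadicInt.norm_le_inv_pow_iff_dvd (x : ℤ_[p]) (m : ℕ) :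
    ‖x‖ ≤ (p : ℝ)⁻¹ ^ m ↔ (p : ℤ_[p]) ^ m ∣ x := by
  rw [inv_pow, ← zpow_natCast, ← zpow_neg, PadicInt.norm_le_pow_iff_mem_span_pow,
    Ideal.mem_span_singleton]

lemma PadicInt.closedBall_zero_eq_range_nsmul {ι : Type*} [Fintype ι] (m : ℕ) :
    closedBall (0 : ι → ℤ_[p]) ((p : ℝ)⁻¹ ^ m) = range fun y : ι → ℤ_[p] => p ^ m • y := by
  ext x
  rw [mem_closedBall_zero_iff, pi_norm_le_iff_of_nonneg (by positivity)]
  simp only [PadicInt.norm_le_inv_pow_iff_dvd]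
  constructor
  · intro h
    choose y hy using h
    exact ⟨y, funext fun i => by simp [nsmul_eq_mul, hy i]⟩
  · rintro ⟨y, rfl⟩ i
    exact ⟨y i, by simp [nsmul_eq_mul]⟩

lemma PadicInt.mapsTo_closedBall_zero {ι ι' : Type*} [Fintype ι] [Fintype ι']
    (A : (ι → ℤ_[p]) →+ (ι' → ℤ_[p])) (m : ℕ) :
    MapsTo A (closedBall 0 ((p : ℝ)⁻¹ ^ m)) (closedBall 0 ((p : ℝ)⁻¹ ^ m)) := by
  rw [PadicInt.closedBall_zero_eq_range_nsmul, PadicInt.closedBall_zero_eq_range_nsmul]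
  rintro _ ⟨y, rfl⟩
  exact ⟨A y, (map_nsmul A _ y).symm⟩

lemma PadicInt.nhds_basis_closedBall_zero (ι : Type*) [Fintype ι] :
    (𝓝 (0 : ι → ℤ_[p])).HasBasis (fun _ => True) fun m : ℕ => closedBall 0 ((p : ℝ)⁻¹ ^ m) :=
  nhds_basis_closedBall_pow (inv_pos.2 (by exact_mod_cast (Fact.out : p.Prime).pos))
    (inv_lt_one_of_one_lt₀ (by exact_mod_cast (Fact.out : p.Prime).one_lt))

/-- The balls `p^m ℤ_p^n × {0}` are eventually `φ`-invariant: the `ℤ_p^n → ℤ_p^n` component of `φ`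
preserves each `p^m ℤ_p^n` by additivity, and the `ℤ_p^n → D` component, being continuous into a
discrete group, kills some `p^t ℤ_p^n`. -/
theorem exists_mapsTo_nhds_zero_padicInt_prod {n : ℕ} {D : Type*} [AddGroup D]
    [TopologicalSpace D] [DiscreteTopology D]
    (φ : (Fin n → ℤ_[p]) × D →+ (Fin n → ℤ_[p]) × D) (hφ : Continuous φ)
    {U : Set ((Fin n → ℤ_[p]) × D)} (hU : U ∈ 𝓝 0) :
    ∃ V ∈ 𝓝 0, V ⊆ U ∧ MapsTo φ V V := by
  set B : ℕ → Set (Fin n → ℤ_[p]) := fun m => closedBall 0 ((p : ℝ)⁻¹ ^ m)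
  have hB := PadicInt.nhds_basis_closedBall_zero (p := p) (Fin n)
  have hB_anti : Antitone B := fun m m' h => closedBall_subset_closedBall <|
    pow_le_pow_of_le_one (by positivity) (inv_le_one_of_one_le₀ (by exact_mod_cast
      (Fact.out : p.Prime).one_lt.le)) h
  have h0 : (0 : (Fin n → ℤ_[p]) × D) = (0, 0) := rfl
  rw [h0, mem_nhds_prod_iff] at hU
  obtain ⟨u, hu, v, hv, huv⟩ := hU
  obtain ⟨m, -, hmu⟩ := hB.mem_iff.1 hu
  set ψ : (Fin n → ℤ_[p]) → D := fun x => (φ (x, 0)).2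
  have hψ : {x | ψ x = 0} ∈ 𝓝 0 := by
    refine (isOpen_discrete {(0 : D)}).preimage (by fun_prop) |>.mem_nhds ?_
    simp [ψ, ← h0]
  obtain ⟨t, -, hψt⟩ := hB.mem_iff.1 hψ
  refine ⟨B (max m t) ×ˢ {0}, ?_, ?_, ?_⟩
  · rw [h0]
    exact prod_mem_nhds (hB.mem_of_mem trivial) ((isOpen_discrete _).mem_nhds rfl)
  · exact (prod_mono ((hB_anti (le_max_left m t)).trans hmu)
      (singleton_subset_iff.2 (mem_of_mem_nhds hv))).trans huv
  · rintro ⟨x, d⟩ ⟨hx, rfl : d = 0⟩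
    refine ⟨?_, hψt (hB_anti (le_max_right m t) hx)⟩
    exact PadicInt.mapsTo_closedBall_zero
      ((AddMonoidHom.fst _ _).comp (φ.comp (AddMonoidHom.inl _ _))) _ hx

end Padic

namespace PadicLCA

variable (p : ℕ) [Fact p.Prime] (n₁ n₂ n₃ : ℕ) (F : Type*) [AddCommGroup F] [TopologicalSpace F]

noncomputable def scaleInv : PadicLCA p n₁ n₂ n₃ F ≃ₜ+ PadicLCA p n₁ n₂ n₃ F :=
  let u : ℚ_[p]ˣ := Units.mk0 p (Nat.cast_ne_zero.2 (Fact.out : p.Prime).ne_zero)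
  ContinuousLinearEquiv.toContinuousAddEquiv <| (ContinuousLinearEquiv.refl ℤ _).prodCongr <|
    (ContinuousLinearEquiv.smulLeft u⁻¹).prodCongr (ContinuousLinearEquiv.refl ℤ _)

theorem addHtop_scaleInv_pos [DiscreteTopology F] (hn : n₂ ≠ 0) :
    0 < addHtop (scaleInv p n₁ n₂ n₃ F) := by
  have hp : (1 : ℝ) < p := by exact_mod_cast (Fact.out : p.Prime).one_lt
  have hnorm (y : Fin n₂ → ℚ_[p]) : ‖(p : ℚ_[p])⁻¹ • y‖ = p * ‖y‖ := by
    simp [norm_smul, Padic.norm_p]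
  have : Nonempty (Fin n₂) := Fin.pos_iff_nonempty.1 (Nat.pos_of_ne_zero hn)
  refine addHtop_addEquiv_pos _ (U := univ ×ˢ closedBall 0 1 ×ˢ {0})
    (isCompact_univ.prod ((isCompact_closedBall 0 1).prod isCompact_singleton))
    (isOpen_univ.prod ((IsUltrametricDist.isOpen_closedBall 0 one_ne_zero).prod
      (isOpen_discrete _))) (by simp) ⟨?_, fun h => ?_⟩
  · rintro x ⟨-, hx, hx0⟩
    refine ⟨trivial, ?_, hx0⟩
    rw [mem_closedBall_zero_iff] at hx ⊢
    change ‖(p : ℚ_[p])⁻¹ • x.2.1‖ ≤ 1 at hx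
    nlinarith [hnorm x.2.1, norm_nonneg x.2.1]
  · have h1 := (@h (0, fun _ => 1, 0) (by simp)).2.1
    rw [mem_closedBall_zero_iff] at h1
    change ‖(p : ℚ_[p])⁻¹ • fun _ => (1 : ℚ_[p])‖ ≤ 1 at h1
    rw [hnorm, pi_norm_const, norm_one, mul_one] at h1
    linarith

end PadicLCA

theorem padicLCA_entropy_zero_iff_general
    (p : ℕ) [Fact p.Prime] (n₁ n₂ n₃ : ℕ)
    (F : Type*) [AddCommGroup F] [TopologicalSpace F] [DiscreteTopology F] :
    (∀ φ : PadicLCA p n₁ n₂ n₃ F →+ PadicLCA p n₁ n₂ n₃ F,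
        Continuous φ → addHtop ⇑φ = 0) ↔ n₂ = 0 := by
  refine ⟨fun h => ?_, ?_⟩
  · by_contra hn
    set σ := PadicLCA.scaleInv p n₁ n₂ n₃ F
    exact (PadicLCA.addHtop_scaleInv_pos p n₁ n₂ n₃ F hn).ne'
      (h σ.toAddEquiv.toAddMonoidHom σ.continuous)
  · rintro rfl φ hφ
    exact addHtop_eq_zero_of_forall_exists_mapsTo φ fun U hU =>
      exists_mapsTo_nhds_zero_padicInt_prod φ hφ hU

/-- For `G = ℤ_p^{n₁} × ℚ_p^{n₂} × (ℚ_p/ℤ_p)^{n₃} × F` (with `F` a finite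
abelian `p`-group, discrete): every continuous endomorphism of `G` has zero topological
entropy iff `n₂ = 0`. -/
theorem padicLCA_entropy_zero_iff
    (p : ℕ) [Fact p.Prime] (n₁ n₂ n₃ : ℕ)
    (F : Type*) [AddCommGroup F] [Fintype F] [TopologicalSpace F] [DiscreteTopology F]
    (hF : ∀ x : F, ∃ k : ℕ, p ^ k • x = 0) :
    (∀ φ : PadicLCA p n₁ n₂ n₃ F →+ PadicLCA p n₁ n₂ n₃ F,
        Continuous φ → addHtop ⇑φ = 0) ↔ n₂ = 0 :=
  padicLCA_entropy_zero_iff_general p n₁ n₂ n₃ F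
end

section
/- Let G be a totally disconnected Hausdorff locally compact abelian group, φ a continuous endomorphism of G, and H a φ-invariant closed subgroup of G. Then the scale satisfies s(φ) ≥ max{ s(φ|_H), s(φ̄) }, where φ̄ is the endomorphism induced by φ on G/H, φ|_H and φ̄ being continuous endomorphisms of the totally disconnected locally compact groups H and G/H respectively. -/
open MeasureTheory Filter Topology Pointwise
open scoped ENNReal NNReal Classical

/-- The restriction of an endomorphism to an invariant subgroup
(junk value `0` if the subgroup is not invariant). -/
noncomputable def subHom {G : Type*} [AddGroup G] (φ : G →+ G) (H : AddSubgroup G) : H →+ H :=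
  if h : H ≤ H.comap φ then (φ.domRestrict H).codRestrict H (fun x => h x.2) else 0

/-- The endomorphism induced on the quotient by an invariant subgroup
(junk value `0` if the subgroup is not invariant). -/
noncomputable def quotHom {G : Type*} [AddCommGroup G] (φ : G →+ G) (H : AddSubgroup G) :
    G ⧸ H →+ G ⧸ H :=
  if h : H ≤ H.comap φ then QuotientAddGroup.map H H φ h else 0

/-- The scale of an endomorphism of a totally disconnected locally compact group:
the minimum of the indices `[φ(U) : U ∩ φ(U)]` over all compact open subgroups `U`. -/
noncomputable def addScale {G : Type*} [AddGroup G] [TopologicalSpace G] (φ : G →+ G) : ℕ :=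
  sInf ((fun U : AddSubgroup G => AddSubgroup.relIndex U (AddSubgroup.map φ U)) ''
    {U : AddSubgroup G | IsCompact (U : Set G) ∧ IsOpen (U : Set G)})

/-!
Let `U` be a compact open subgroup of `G` realising `s(φ)`. Then `U ∩ H` is a compact open
subgroup of `H` (as `H` is closed) and the image `Ū` of `U` is a compact open subgroup of `G/H`.
Since `φ(U ∩ H) ⊆ φ(U)` and `φ̄(Ū)` is the image of `φ(U)`, the relative index of `U ∩ H` in
`φ(U ∩ H)` and that of `Ū` in `φ̄(Ū)` are both at most `[φ(U) : U ∩ φ(U)]`, which is finite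
because `φ(U)` is compact and `U` is open.
-/

namespace MulAction

@[to_additive]
theorem stabilizer_subset_of_one_mem {G : Type*} [Group G] {W : Set G} (hW : (1 : G) ∈ W) :
    (stabilizer G W : Set G) ⊆ W := fun g hg ↦ by
  simpa using (mem_stabilizer_set.mp hg 1).mpr hW

@[to_additive]
theorem isOpen_stabilizer_of_isCompact {G : Type*} [Group G] [TopologicalSpace G]
    [IsTopologicalGroup G] {W : Set G} (hWc : IsCompact W) (hWo : IsOpen W) :
    IsOpen (stabilizer G W : Set G) := by
  obtain ⟨V, hV, hVW⟩ := compact_open_separated_mul_left hWc hWo subset_rfl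
  refine Subgroup.isOpen_of_mem_nhds _ (g := 1) (Filter.mem_of_superset
    (Filter.inter_mem hV (inv_mem_nhds_one G hV)) fun g ⟨hg, hg'⟩ ↦ ?_)
  refine mem_stabilizer_set.mpr fun b ↦ ⟨fun hb ↦ ?_, fun hb ↦ hVW (Set.mul_mem_mul hg hb)⟩
  simpa using hVW (Set.mul_mem_mul hg' hb)

end MulAction

/-- van Dantzig's theorem: the stabiliser of a compact open neighbourhood of `1` under left
translation is a compact open subgroup. -/
@[to_additive]
theorem exists_isCompact_isOpen_subgroup (G : Type*) [Group G] [TopologicalSpace G]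
    [IsTopologicalGroup G] [T2Space G] [LocallyCompactSpace G] [TotallyDisconnectedSpace G] :
    ∃ U : Subgroup G, IsCompact (U : Set G) ∧ IsOpen (U : Set G) := by
  obtain ⟨K, hKc, hK⟩ := exists_compact_mem_nhds (1 : G)
  obtain ⟨W, hW, hW1, hWK⟩ := loc_compact_Haus_tot_disc_of_zero_dim.mem_nhds_iff.mp
    (isOpen_interior.mem_nhds (mem_interior_iff_mem_nhds.mpr hK))
  have hWc : IsCompact W := hKc.of_isClosed_subset hW.1 (hWK.trans interior_subset)
  have hSo := MulAction.isOpen_stabilizer_of_isCompact hWc hW.2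
  exact ⟨MulAction.stabilizer G W, hWc.of_isClosed_subset (Subgroup.isClosed_of_isOpen _ hSo)
    (MulAction.stabilizer_subset_of_one_mem hW1), hSo⟩

@[to_additive]
theorem Subgroup.relIndex_ne_zero_of_isOpen_of_isCompact {G : Type*} [Group G]
    [TopologicalSpace G] [IsTopologicalGroup G] {U K : Subgroup G} (hU : IsOpen (U : Set G))
    (hK : IsCompact (K : Set G)) : U.relIndex K ≠ 0 := by
  have : CompactSpace K := isCompact_iff_compactSpace.mp hK
  have := (U.subgroupOf K).quotient_finite_of_isOpen (hU.preimage continuous_subtype_val)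
  exact Subgroup.index_ne_zero_of_finite

section Scale

variable {G : Type*} [AddGroup G] [TopologicalSpace G]

theorem addScale_le (φ : G →+ G) {U : AddSubgroup G} (hUc : IsCompact (U : Set G))
    (hUo : IsOpen (U : Set G)) : addScale φ ≤ U.relIndex (U.map φ) :=
  Nat.sInf_le ⟨U, ⟨hUc, hUo⟩, rfl⟩

theorem exists_addScale_eq (φ : G →+ G) {U : AddSubgroup G} (hUc : IsCompact (U : Set G))
    (hUo : IsOpen (U : Set G)) : ∃ W : AddSubgroup G, IsCompact (W : Set G) ∧
      IsOpen (W : Set G) ∧ addScale φ = W.relIndex (W.map φ) := by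
  obtain ⟨W, ⟨hWc, hWo⟩, hW⟩ : addScale φ ∈ (fun U : AddSubgroup G ↦ U.relIndex (U.map φ)) ''
      {U : AddSubgroup G | IsCompact (U : Set G) ∧ IsOpen (U : Set G)} :=
    Nat.sInf_mem ⟨_, U, ⟨hUc, hUo⟩, rfl⟩
  exact ⟨W, hWc, hWo, hW.symm⟩

end Scale

theorem coe_subHom_apply {G : Type*} [AddGroup G] {φ : G →+ G} {H : AddSubgroup G}
    (hinv : H ≤ H.comap φ) (x : H) : (subHom φ H x : G) = φ x := by
  simp only [subHom, dif_pos hinv]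
  rfl

theorem quotHom_mk {G : Type*} [AddCommGroup G] {φ : G →+ G} {H : AddSubgroup G}
    (hinv : H ≤ H.comap φ) (x : G) : quotHom φ H (x : G ⧸ H) = (φ x : G ⧸ H) := by
  simp [quotHom, dif_pos hinv]

theorem addScale_subHom_le {G : Type*} [AddGroup G] [TopologicalSpace G] {φ : G →+ G}
    {H : AddSubgroup G} (hH : IsClosed (H : Set G)) (hinv : H ≤ H.comap φ) {U : AddSubgroup G}
    (hUc : IsCompact (U : Set G)) (hUo : IsOpen (U : Set G)) (hfin : U.relIndex (U.map φ) ≠ 0) :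
    addScale (subHom φ H) ≤ U.relIndex (U.map φ) := by
  set V : AddSubgroup H := U.comap H.subtype
  have hVc : IsCompact (V : Set H) :=
    hH.isClosedEmbedding_subtypeVal.isProperMap.isCompact_preimage hUc
  have hmap : (V.map (subHom φ H)).map H.subtype ≤ U.map φ := by
    rintro _ ⟨_, ⟨x, hx, rfl⟩, rfl⟩
    exact ⟨x, hx, (coe_subHom_apply hinv x).symm⟩
  calc addScale (subHom φ H) ≤ V.relIndex (V.map (subHom φ H)) :=
        addScale_le _ hVc (hUo.preimage continuous_subtype_val)
    _ = U.relIndex ((V.map (subHom φ H)).map H.subtype) := AddSubgroup.relIndex_comap _ _ _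
    _ ≤ U.relIndex (U.map φ) := AddSubgroup.relIndex_le_of_le_right hmap hfin

theorem addScale_quotHom_le {G : Type*} [AddCommGroup G] [TopologicalSpace G]
    [SeparatelyContinuousAdd G] {φ : G →+ G} {H : AddSubgroup G} (hinv : H ≤ H.comap φ)
    {U : AddSubgroup G} (hUc : IsCompact (U : Set G)) (hUo : IsOpen (U : Set G))
    (hfin : U.relIndex (U.map φ) ≠ 0) : addScale (quotHom φ H) ≤ U.relIndex (U.map φ) := by
  set π := QuotientAddGroup.mk' H
  have hmap : (U.map π).map (quotHom φ H) = (U.map φ).map π := by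
    simp only [AddSubgroup.map_map]
    congr 1
    ext x
    exact quotHom_mk hinv x
  calc addScale (quotHom φ H) ≤ (U.map π).relIndex ((U.map π).map (quotHom φ H)) :=
        addScale_le _ (hUc.image continuous_quot_mk)
          (QuotientAddGroup.isOpenMap_coe (N := H) _ hUo)
    _ = ((U.map π).comap π).relIndex (U.map φ) := by
        rw [hmap, AddSubgroup.relIndex_comap]
    _ ≤ U.relIndex (U.map φ) :=
        AddSubgroup.relIndex_le_of_le_left (AddSubgroup.le_comap_map π U) hfin

/-- For a totally disconnected locally compact abelian group `G`, a
continuous endomorphism `φ` and a `φ`-invariant closed subgroup `H`: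
`s(φ) ≥ max (s(φ|_H)) (s(φ̄))`, where `φ̄` is induced on `G/H`. -/
theorem scale_ge_max_restriction_quotient
    (G : Type*) [AddCommGroup G] [TopologicalSpace G] [IsTopologicalAddGroup G]
    [T2Space G] [LocallyCompactSpace G] [TotallyDisconnectedSpace G]
    (φ : G →+ G) (hφ : Continuous φ)
    (H : AddSubgroup G) (hH : IsClosed (H : Set G)) (hinv : H ≤ H.comap φ) :
    max (addScale (subHom φ H)) (addScale (quotHom φ H)) ≤ addScale φ := by
  obtain ⟨U₀, hU₀c, hU₀o⟩ := exists_isCompact_isOpen_addSubgroup G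
  obtain ⟨U, hUc, hUo, hU⟩ := exists_addScale_eq φ hU₀c hU₀o
  have hfin : U.relIndex (U.map φ) ≠ 0 :=
    AddSubgroup.relIndex_ne_zero_of_isOpen_of_isCompact hUo (by simpa using hUc.image hφ)
  rw [hU]
  exact max_le (addScale_subHom_le hH hinv hUc hUo hfin) (addScale_quotHom_le hinv hUc hUo hfin)
end
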